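/- Let V be a ℚ-vector space with a symmetric ℚ-bilinear form x·y. On triples (r,f,t) ∈ ℚ × V × ℚ define the product (r,f,t)*(r',f',t') = (rr', rf' + r'f, rt' + r't + f·f'), for x ∈ V set ch(x) = (1, x, (x·x)/2), and set χ(r,f,t) = 2r + t. Let h, d₁, d₂ ∈ V satisfy h·h = 2, d₁·d₁ = −2, d₂·d₂ = −2, d₁·d₂ = 0, h·d₁ = 2, h·d₂ = 2, and set ℓ = d₁ + d₂ − 2h. Then for any f ∈ V and r, t ∈ ℚ, writing F = (r,f,t), the triple χ(F*ch(d₁−h))·ch(h−d₁) + χ(F*ch(d₂−h))·ch(h−d₂) − F*ch(d₂−h)*ch(h−d₂) equals (−r + f·ℓ + 2t, −f − tℓ − (f·(d₁−h))(d₁−h) − (f·(d₂−h))(d₂−h), −2 f·ℓ − 5t). -/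

import Mathlib

/-
Since `ch(a) · ch(−a) = 1`, the last term is just `−F`. For `a = dᵢ − h` one has `a·a = −4`,
so Riemann–Roch gives `χ(F · ch(a)) = f·a + t`, and `ch(h − dᵢ) = (1, −a, −2)`; summing over
`i` with `a₁ + a₂ = ℓ` gives the formula.
-/

/-- Cup product of Chern-character triples `(ch₀, ch₁, ∫ch₂)` on a K3 surface. -/
def mukaiMul {V : Type*} [AddCommGroup V] [Module ℚ V]
    (B : V →ₗ[ℚ] V →ₗ[ℚ] ℚ) (x y : ℚ × V × ℚ) : ℚ × V × ℚ :=
  (x.1 * y.1, x.1 • y.2.1 + y.1 • x.2.1, x.1 * y.2.2 + y.1 * x.2.2 + B x.2.1 y.2.1)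

/-- Chern character of a line bundle with first Chern class `x`. -/
def chLine {V : Type*} [AddCommGroup V] [Module ℚ V]
    (B : V →ₗ[ℚ] V →ₗ[ℚ] ℚ) (x : V) : ℚ × V × ℚ :=
  (1, x, B x x / 2)

/-- Euler characteristic via Riemann–Roch on a K3 surface. -/
def chiK3 {V : Type*} [AddCommGroup V] [Module ℚ V] (x : ℚ × V × ℚ) : ℚ :=
  2 * x.1 + x.2.2

section Mukai

variable {V : Type*} [AddCommGroup V] [Module ℚ V] (B : V →ₗ[ℚ] V →ₗ[ℚ] ℚ)

theorem mukaiMul_chLine_mukaiMul_chLine_neg (F : ℚ × V × ℚ) (a : V) :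
    mukaiMul B (mukaiMul B F (chLine B a)) (chLine B (-a)) = F := by
  obtain ⟨r, f, t⟩ := F
  simp only [mukaiMul, chLine, map_neg, map_add, map_smul, LinearMap.neg_apply,
    LinearMap.add_apply, LinearMap.smul_apply, smul_eq_mul, smul_neg, Prod.ext_iff]
  refine ⟨by ring, by module, by ring⟩

theorem chiK3_mukaiMul_chLine (r t : ℚ) (f a : V) :
    chiK3 (mukaiMul B (r, f, t) (chLine B a)) = (2 + B a a / 2) * r + t + B f a := by
  simp only [chiK3, mukaiMul, chLine]
  ring

theorem chLine_neg (a : V) : chLine B (-a) = (1, -a, B a a / 2) := by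
  simp only [chLine, map_neg, LinearMap.neg_apply, neg_neg]

theorem apply_sub_sub_of_symm (hsym : ∀ x y : V, B x y = B y x) (d h : V) :
    B (d - h) (d - h) = B d d - 2 * B h d + B h h := by
  simp only [map_sub, LinearMap.sub_apply, hsym d h]
  ring

end Mukai

theorem stmt_7_general {V : Type*} [AddCommGroup V] [Module ℚ V]
    (B : V →ₗ[ℚ] V →ₗ[ℚ] ℚ) (hsym : ∀ x y : V, B x y = B y x)
    (h d₁ d₂ : V) (hhh : B h h = 2) (hd₁ : B d₁ d₁ = -2) (hd₂ : B d₂ d₂ = -2)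
    (hhd₁ : B h d₁ = 2) (hhd₂ : B h d₂ = 2)
    (ℓ : V) (hl : ℓ = d₁ + d₂ - (2 : ℚ) • h)
    (f : V) (r t : ℚ) :
    (chiK3 (mukaiMul B (r, f, t) (chLine B (d₁ - h)))) • chLine B (h - d₁) +
      (chiK3 (mukaiMul B (r, f, t) (chLine B (d₂ - h)))) • chLine B (h - d₂) -
      mukaiMul B (mukaiMul B (r, f, t) (chLine B (d₂ - h))) (chLine B (h - d₂)) =
    (-r + B f ℓ + 2 * t,
      -f - t • ℓ - (B f (d₁ - h)) • (d₁ - h) - (B f (d₂ - h)) • (d₂ - h),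
      -2 * B f ℓ - 5 * t) := by
  have hsq₁ : B (d₁ - h) (d₁ - h) = -4 := by
    rw [apply_sub_sub_of_symm B hsym, hd₁, hhd₁, hhh]; norm_num
  have hsq₂ : B (d₂ - h) (d₂ - h) = -4 := by
    rw [apply_sub_sub_of_symm B hsym, hd₂, hhd₂, hhh]; norm_num
  have hℓ : ℓ = (d₁ - h) + (d₂ - h) := by rw [hl]; module
  rw [← neg_sub d₁ h, ← neg_sub d₂ h, mukaiMul_chLine_mukaiMul_chLine_neg,
    chiK3_mukaiMul_chLine, chiK3_mukaiMul_chLine, chLine_neg, chLine_neg, hsq₁, hsq₂, hℓ,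
    map_add]
  simp only [Prod.smul_mk, Prod.mk_add_mk, Prod.mk_sub_mk, smul_eq_mul, Prod.ext_iff]
  refine ⟨by ring, by module, by ring⟩

/-- The type I Chern character computation in Theorem 5.3 (degenerate reflexive K3 surface
of type I: `h·h = 2`, `dᵢ·dᵢ = −2`, `d₁·d₂ = 0`, `h·dᵢ = 2`, `ℓ = d₁ + d₂ − 2h`). -/
theorem stmt_7 {V : Type*} [AddCommGroup V] [Module ℚ V]
    (B : V →ₗ[ℚ] V →ₗ[ℚ] ℚ) (hsym : ∀ x y : V, B x y = B y x)
    (h d₁ d₂ : V) (hhh : B h h = 2) (hd₁ : B d₁ d₁ = -2) (hd₂ : B d₂ d₂ = -2)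
    (hd₁d₂ : B d₁ d₂ = 0) (hhd₁ : B h d₁ = 2) (hhd₂ : B h d₂ = 2)
    (ℓ : V) (hl : ℓ = d₁ + d₂ - (2 : ℚ) • h)
    (f : V) (r t : ℚ) :
    (chiK3 (mukaiMul B (r, f, t) (chLine B (d₁ - h)))) • chLine B (h - d₁) +
      (chiK3 (mukaiMul B (r, f, t) (chLine B (d₂ - h)))) • chLine B (h - d₂) -
      mukaiMul B (mukaiMul B (r, f, t) (chLine B (d₂ - h))) (chLine B (h - d₂)) =
    (-r + B f ℓ + 2 * t,
      -f - t • ℓ - (B f (d₁ - h)) • (d₁ - h) - (B f (d₂ - h)) • (d₂ - h),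
      -2 * B f ℓ - 5 * t) :=
  stmt_7_general B hsym h d₁ d₂ hhh hd₁ hd₂ hhd₁ hhd₂ ℓ hl f r t
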